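/- Let h : [0,T] → ℝ have finite p-variation for some p ≥ 1, and let Δ = T/M for a positive integer M. Then ∫_0^T |h(y) − h((y)_Δ)| dy ≤ K · ‖h‖_{p-var,T} · (T^{(p−1)/p} Δ^{1/p} + Δ) for a universal constant K, where (y)_Δ = ⌊y/Δ⌋·Δ. -/

import Mathlib

open MeasureTheory

/-- The set of candidate values `(∑ |h(t_{i+1})−h(t_i)|^p)^{1/p}` over finite
partitions `0 = t_0 < t_1 < ... < t_n = T` of `[0,T]`. -/
def pVarSet (p T : ℝ) (h : ℝ → ℝ) : Set ℝ :=
  {v : ℝ | ∃ (n : ℕ) (t : ℕ → ℝ), 0 < n ∧ t 0 = 0 ∧ t n = T ∧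
    (∀ i < n, t i < t (i + 1)) ∧
    v = (∑ i ∈ Finset.range n, |h (t (i + 1)) - h (t i)| ^ p) ^ (1 / p)}

/-- The `p`-variation seminorm of `h` on `[0,T]`. -/
noncomputable def pVarNorm (p T : ℝ) (h : ℝ → ℝ) : ℝ := sSup (pVarSet p T h)

/-!
On the cell `[iΔ, (i+1)Δ)` the integrand is `|h y - h(iΔ)|`, so by the first moment method
the integral over the cell is at most `Δ·|h(zᵢ) - h(iΔ)|` for some interior point `zᵢ`.
The points `0 < z₀ < Δ < z₁ < 2Δ < ⋯ < T` form a partition of `[0,T]`, hence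
`∑ |h(zᵢ) - h(iΔ)|^p ≤ ‖h‖^p_{p-var}`, and the power-mean inequality gives
`Δ ∑ |h(zᵢ) - h(iΔ)| ≤ Δ M^{1-1/p} ‖h‖_{p-var} = T^{(p-1)/p} Δ^{1/p} ‖h‖_{p-var}`; so `K = 1` works.
-/

open Set Finset

lemma pVarNorm_nonneg (p T : ℝ) (h : ℝ → ℝ) : 0 ≤ pVarNorm p T h :=
  Real.sSup_nonneg fun _ ⟨_, _, _, _, _, _, hv⟩ => hv ▸ by positivity

lemma rpow_sum_rpow_abs_sub_grid_le_pVarNorm {p T Δ : ℝ} {h : ℝ → ℝ} {M : ℕ} (hp : 0 ≤ p)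
    (hbdd : BddAbove (pVarSet p T h)) (hM : 0 < M) (hMΔ : M * Δ = T) {z : ℕ → ℝ}
    (hz : ∀ i < M, z i ∈ Ioo (i * Δ) ((i + 1) * Δ)) :
    (∑ i ∈ range M, |h (z i) - h (i * Δ)| ^ p) ^ (1 / p) ≤ pVarNorm p T h := by
  set t : ℕ → ℝ := fun k => if k % 2 = 0 then (k / 2 : ℕ) * Δ else z (k / 2)
  have ht_even (i : ℕ) : t (2 * i) = i * Δ := by simp [t]
  have ht_odd (i : ℕ) : t (2 * i + 1) = z i := by simp [t, Nat.add_mod, Nat.add_div]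
  have ht_mono : ∀ k < 2 * M, t k < t (k + 1) := by
    intro k hk
    obtain ⟨i, rfl | rfl⟩ := Nat.even_or_odd' k
    · rw [ht_even, ht_odd]
      exact (hz i (by omega)).1
    · rw [show 2 * i + 1 + 1 = 2 * (i + 1) by ring, ht_even, ht_odd]
      push_cast
      exact (hz i (by omega)).2
  calc (∑ i ∈ range M, |h (z i) - h (i * Δ)| ^ p) ^ (1 / p)
      = (∑ k ∈ (range M).image (2 * ·), |h (t (k + 1)) - h (t k)| ^ p) ^ (1 / p) := by
        rw [sum_image fun _ _ _ _ hij => by omega]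
        simp only [ht_even, ht_odd]
    _ ≤ (∑ k ∈ range (2 * M), |h (t (k + 1)) - h (t k)| ^ p) ^ (1 / p) := by
        gcongr
        · intro k hk
          simp only [Finset.mem_image, Finset.mem_range] at hk ⊢
          omega
    _ ≤ pVarNorm p T h :=
        le_csSup hbdd ⟨2 * M, t, by omega, by simpa using ht_even 0,
          by rw [ht_even, hMΔ], ht_mono, rfl⟩

lemma sum_le_card_rpow_mul_rpow_sum_rpow {ι : Type*} (s : Finset ι) {f : ι → ℝ} {p : ℝ}
    (hp : 1 ≤ p) (hf : ∀ i ∈ s, 0 ≤ f i) :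
    ∑ i ∈ s, f i ≤ (#s : ℝ) ^ ((p - 1) / p) * (∑ i ∈ s, f i ^ p) ^ (1 / p) := by
  have hp0 : p ≠ 0 := by positivity
  have hsum : 0 ≤ ∑ i ∈ s, f i := sum_nonneg hf
  calc ∑ i ∈ s, f i = ((∑ i ∈ s, f i) ^ p) ^ (1 / p) := by
        rw [← Real.rpow_mul hsum, mul_one_div_cancel hp0, Real.rpow_one]
    _ ≤ ((#s : ℝ) ^ (p - 1) * ∑ i ∈ s, f i ^ p) ^ (1 / p) := by
        gcongr
        exact Real.rpow_sum_le_const_mul_sum_rpow_of_nonneg s hp hf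
    _ = (#s : ℝ) ^ ((p - 1) / p) * (∑ i ∈ s, f i ^ p) ^ (1 / p) := by
        have : 0 ≤ ∑ i ∈ s, f i ^ p := sum_nonneg fun i hi => Real.rpow_nonneg (hf i hi) p
        rw [Real.mul_rpow (by positivity) this, ← Real.rpow_mul (by positivity), mul_one_div]

lemma exists_mem_Ioo_intervalIntegral_le_mul {f : ℝ → ℝ} {a b : ℝ} (hab : a < b)
    (hf : IntervalIntegrable f volume a b) :
    ∃ x ∈ Ioo a b, ∫ y in a..b, f y ≤ (b - a) * f x := by
  obtain ⟨x, hx, hle⟩ := exists_setAverage_le (μ := volume) (s := Ioo a b) (by simp [hab])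
    (by simp) ((intervalIntegrable_iff_integrableOn_Ioo_of_le hab.le).1 hf)
  refine ⟨x, hx, ?_⟩
  rw [setAverage_eq, measureReal_def, Real.volume_Ioo, ENNReal.toReal_ofReal (by linarith),
    smul_eq_mul, inv_mul_le_iff₀ (by linarith)] at hle
  rwa [intervalIntegral.integral_of_le hab.le, integral_Ioc_eq_integral_Ioo]

lemma floor_div_mul_eq_of_mem_Ico {Δ y : ℝ} {i : ℕ} (hΔ : 0 < Δ)
    (hy : y ∈ Ico (i * Δ) ((i + 1) * Δ)) : (⌊y / Δ⌋ : ℝ) * Δ = i * Δ := by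
  rw [show ⌊y / Δ⌋ = i from Int.floor_eq_iff.2 ⟨?_, ?_⟩, Int.cast_natCast]
  · rw [Int.cast_natCast, le_div_iff₀ hΔ]; exact hy.1
  · rw [Int.cast_natCast, div_lt_iff₀ hΔ]; exact hy.2

theorem intervalIntegral_abs_sub_floor_le {p T : ℝ} {M : ℕ} {h : ℝ → ℝ} (hp : 1 ≤ p)
    (hT : 0 < T) (hM : 0 < M) (hbdd : BddAbove (pVarSet p T h))
    (hint : IntervalIntegrable (fun y => |h y - h (⌊y / (T / M)⌋ * (T / M))|) volume 0 T) :
    ∫ y in 0..T, |h y - h (⌊y / (T / M)⌋ * (T / M))| ≤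
      T ^ ((p - 1) / p) * (T / M) ^ (1 / p) * pVarNorm p T h := by
  set Δ := T / M with hΔ_def
  set g : ℝ → ℝ := fun y => |h y - h (⌊y / Δ⌋ * Δ)|
  have hΔ : 0 < Δ := by positivity
  have hMΔ : (M : ℝ) * Δ = T := by rw [hΔ_def]; field_simp
  have hcell_int : ∀ i < M, IntervalIntegrable g volume (i * Δ) ((i + 1) * Δ) := by
    intro i hi
    have hi' : (i : ℝ) + 1 ≤ M := by exact_mod_cast hi
    refine hint.mono_set ?_
    rw [Set.uIcc_of_le (by nlinarith), Set.uIcc_of_le hT.le]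
    exact Icc_subset_Icc (by positivity) (by nlinarith)
  have hcell : ∀ i < M, ∃ z ∈ Ioo (i * Δ) ((i + 1) * Δ),
      ∫ y in (i * Δ)..((i + 1) * Δ), g y ≤ Δ * |h z - h (i * Δ)| := by
    intro i hi
    obtain ⟨z, hz, hle⟩ :=
      exists_mem_Ioo_intervalIntegral_le_mul (by nlinarith) (hcell_int i hi)
    refine ⟨z, hz, ?_⟩
    have hgz : g z = |h z - h (i * Δ)| := by
      simp only [g, floor_div_mul_eq_of_mem_Ico hΔ (Ioo_subset_Ico_self hz)]
    rwa [hgz, show (i + 1) * Δ - i * Δ = Δ by ring] at hle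
  choose! z hz hz_cell using hcell
  have hscale : Δ * (M : ℝ) ^ ((p - 1) / p) = T ^ ((p - 1) / p) * Δ ^ (1 / p) := by
    have hp0 : p ≠ 0 := by positivity
    rw [← hMΔ, Real.mul_rpow (by positivity) hΔ.le, mul_assoc, ← Real.rpow_add hΔ,
      show (p - 1) / p + 1 / p = 1 by field_simp; ring, Real.rpow_one, mul_comm]
  calc ∫ y in 0..T, g y = ∑ i ∈ range M, ∫ y in (i * Δ)..((i + 1) * Δ), g y := by
        have hsplit := intervalIntegral.sum_integral_adjacent_intervals (μ := volume)
          (a := fun i : ℕ => i * Δ) fun i hi => by simpa using hcell_int i hi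
        simp only [Nat.cast_add, Nat.cast_one, Nat.cast_zero, zero_mul, hMΔ] at hsplit
        exact hsplit.symm
    _ ≤ ∑ i ∈ range M, Δ * |h (z i) - h (i * Δ)| :=
        sum_le_sum fun i hi => hz_cell i (mem_range.1 hi)
    _ = Δ * ∑ i ∈ range M, |h (z i) - h (i * Δ)| := (mul_sum ..).symm
    _ ≤ Δ * ((M : ℝ) ^ ((p - 1) / p) *
          (∑ i ∈ range M, |h (z i) - h (i * Δ)| ^ p) ^ (1 / p)) := by
        gcongr
        simpa using sum_le_card_rpow_mul_rpow_sum_rpow (range M) hp fun _ _ => abs_nonneg _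
    _ ≤ Δ * ((M : ℝ) ^ ((p - 1) / p) * pVarNorm p T h) := by
        gcongr
        exact rpow_sum_rpow_abs_sub_grid_le_pVarNorm (by linarith) hbdd hM hMΔ hz
    _ = T ^ ((p - 1) / p) * Δ ^ (1 / p) * pVarNorm p T h := by rw [← hscale]; ring

/-- if `h` has finite `p`-variation on `[0,T]` (`p ≥ 1`) and
`Δ = T/M` for a positive integer `M`, then
`∫_0^T |h(y) − h((y)_Δ)| dy ≤ K·‖h‖_{p-var,T}·(T^{(p−1)/p} Δ^{1/p} + Δ)` for a
universal constant `K`, where `(y)_Δ = ⌊y/Δ⌋·Δ`. -/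
theorem stmt2 :
    ∃ K > (0:ℝ), ∀ (p T : ℝ) (M : ℕ) (h : ℝ → ℝ), 1 ≤ p → 0 < T → 0 < M →
      BddAbove (pVarSet p T h) →
      (∫ y in (0:ℝ)..T, |h y - h ((⌊y / (T / M)⌋ : ℝ) * (T / M))|) ≤
        K * pVarNorm p T h * (T ^ ((p - 1) / p) * (T / M) ^ (1 / p) + T / M) := by
  refine ⟨1, one_pos, fun p T M h hp hT hM hbdd => ?_⟩
  rw [one_mul]
  by_cases hint : IntervalIntegrable (fun y => |h y - h (⌊y / (T / M)⌋ * (T / M))|) volume 0 T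
  · calc _ ≤ T ^ ((p - 1) / p) * (T / M) ^ (1 / p) * pVarNorm p T h :=
          intervalIntegral_abs_sub_floor_le hp hT hM hbdd hint
      _ ≤ pVarNorm p T h * (T ^ ((p - 1) / p) * (T / M) ^ (1 / p) + T / M) := by
          rw [mul_comm]
          gcongr
          · exact pVarNorm_nonneg p T h
          · exact le_add_of_nonneg_right (by positivity)
  · rw [intervalIntegral.integral_undef hint]
    exact mul_nonneg (pVarNorm_nonneg p T h) (by positivity)
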